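/- arXiv:math/9901081 — 2 statements merged into one kernel-verified Lean document; each statement's English description precedes it below -/
import Mathlib

section
/- Let i_n, i*_n (n ≥ 1), i*_0, ii, iii, iv, iv*, iii*, ii* be nonnegative integers with all but finitely many i_n, i*_n zero, and let a be an integer. If Q1 = 24, Q2 = a − 2 and degJ ≤ Q4, then 0 ≤ Q5 ≤ 20 − a. -/
/-!
Subtracting the second relation from the first gives
`26 - a = Σ i_n + 2 Σ i*_n + 2 Q5 + 2 (ii* + iii* + iv*)`,
while substituting `Q1 = 24` into the Miranda–Persson inequality gives
`6 ≤ Σ i_n + 2 Σ i*_n + Q5 + 2 (ii* + iii* + iv*)`.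
The difference of the two is `20 - a - Q5 ≥ 0`.
-/

section FinsumAffine

variable {α R : Type*} [CommRing R] {f : α → R}

theorem finsum_add_const_mul [NoZeroDivisors R] (hf : f.support.Finite) (c : α → R) (d : R) :
    ∑ᶠ x, (c x + d) * f x = ∑ᶠ x, c x * f x + d * ∑ᶠ x, f x := by
  simp only [add_mul]
  rw [finsum_add_distrib (hf.subset (Function.support_mul_subset_right _ _))
    (hf.subset (Function.support_mul_subset_right _ _)), mul_finsum _ _]

theorem finsum_sub_const_mul [NoZeroDivisors R] (hf : f.support.Finite) (c : α → R) (d : R) :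
    ∑ᶠ x, (c x - d) * f x = ∑ᶠ x, c x * f x - d * ∑ᶠ x, f x := by
  simpa only [neg_mul, ← sub_eq_add_neg] using finsum_add_const_mul hf c (-d)

theorem finsum_mul_add {g : α → R} (hf : f.support.Finite) (hg : g.support.Finite) (c : α → R) :
    ∑ᶠ x, c x * (f x + g x) = ∑ᶠ x, c x * f x + ∑ᶠ x, c x * g x := by
  simp only [mul_add]
  exact finsum_add_distrib (hf.subset (Function.support_mul_subset_right _ _))
    (hg.subset (Function.support_mul_subset_right _ _))

end FinsumAffine

theorem stmt_1_general (i istar : ℕ → ℕ)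
    (hfin : (Function.support i).Finite) (hfin' : (Function.support istar).Finite)
    (ii iii iv i0star ivstar iiistar iistar : ℕ) (a : ℤ)
    (hQ1 : (∑ᶠ n : ℕ, (n : ℤ) * i n) + (∑ᶠ n : ℕ, ((n : ℤ) + 6) * istar n)
      + 6 * i0star + 10 * iistar + 9 * iiistar + 8 * ivstar
      + 4 * iv + 3 * iii + 2 * ii = 24)
    (hQ2 : (∑ᶠ n : ℕ, ((n : ℤ) - 1) * i n) + (∑ᶠ n : ℕ, ((n : ℤ) + 4) * istar n)
      + 4 * i0star + 8 * iistar + 7 * iiistar + 6 * ivstar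
      + 2 * iv + iii = a - 2)
    (hMP : (∑ᶠ n : ℕ, (n : ℤ) * ((i n : ℤ) + istar n))
      ≤ 6 * (∑ᶠ n : ℕ, ((i n : ℤ) + istar n)) + 4 * ((ii : ℤ) + ivstar)
        + 3 * ((iii : ℤ) + iiistar) + 2 * ((iv : ℤ) + iistar) - 12) :
    0 ≤ ((i0star : ℤ) + iv + iii + ii)
      ∧ ((i0star : ℤ) + iv + iii + ii) ≤ 20 - a := by
  have hI : (fun n ↦ (i n : ℤ)).support.Finite := hfin.subset fun _ ↦ by simp
  have hIstar : (fun n ↦ (istar n : ℤ)).support.Finite := hfin'.subset fun _ ↦ by simp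
  rw [finsum_add_const_mul hIstar] at hQ1
  rw [finsum_sub_const_mul hI, finsum_add_const_mul hIstar] at hQ2
  rw [finsum_mul_add hI hIstar, finsum_add_distrib hI hIstar] at hMP
  have hP : 0 ≤ ∑ᶠ n, (i n : ℤ) := finsum_nonneg fun _ ↦ by positivity
  have hQ : 0 ≤ ∑ᶠ n, (istar n : ℤ) := finsum_nonneg fun _ ↦ by positivity
  constructor <;> linarith

/-- Lemma 2.2(2): if `Q1 = 24`, `Q2 = a - 2` and `degJ ≤ Q4` then `0 ≤ Q5 ≤ 20 - a`. -/
theorem stmt_1 (i istar : ℕ → ℕ)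
    (hi0 : i 0 = 0) (histar0 : istar 0 = 0)
    (hfin : (Function.support i).Finite) (hfin' : (Function.support istar).Finite)
    (ii iii iv i0star ivstar iiistar iistar : ℕ) (a : ℤ)
    (hQ1 : (∑ᶠ n : ℕ, (n : ℤ) * i n) + (∑ᶠ n : ℕ, ((n : ℤ) + 6) * istar n)
      + 6 * i0star + 10 * iistar + 9 * iiistar + 8 * ivstar
      + 4 * iv + 3 * iii + 2 * ii = 24)
    (hQ2 : (∑ᶠ n : ℕ, ((n : ℤ) - 1) * i n) + (∑ᶠ n : ℕ, ((n : ℤ) + 4) * istar n)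
      + 4 * i0star + 8 * iistar + 7 * iiistar + 6 * ivstar
      + 2 * iv + iii = a - 2)
    (hMP : (∑ᶠ n : ℕ, (n : ℤ) * ((i n : ℤ) + istar n))
      ≤ 6 * (∑ᶠ n : ℕ, ((i n : ℤ) + istar n)) + 4 * ((ii : ℤ) + ivstar)
        + 3 * ((iii : ℤ) + iiistar) + 2 * ((iv : ℤ) + iistar) - 12) :
    0 ≤ ((i0star : ℤ) + iv + iii + ii)
      ∧ ((i0star : ℤ) + iv + iii + ii) ≤ 20 - a :=
  stmt_1_general i istar hfin hfin' ii iii iv i0star ivstar iiistar iistar a hQ1 hQ2 hMP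
end

section
/- Let i_n, i*_n (n ≥ 1), i*_0, ii, iii, iv, iv*, iii*, ii* be nonnegative integers with all but finitely many i_n, i*_n zero. If Q1 = 24, Q2 = 18, degJ ≠ 0 and degJ ≤ Q4, then degJ = Q4, i.e. Σ_{n≥1} n·(i_n + i*_n) = 6·Σ_{n≥1} (i_n + i*_n) + 4·(ii + iv*) + 3·(iii + iii*) + 2·(iv + ii*) − 12; moreover i*_0 = iv = iii = ii = 0. -/
/-!
Writing `A = Σ n·i_n`, `B = Σ n·i*_n`, `N = Σ i_n`, `N* = Σ i*_n`, all three identities are linear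
in these sums once the weights `n + c` are split off. Subtracting `Q2` from `Q1` gives
`N + 2N* + 2(i*_0 + ii + iii + iv + iv* + iii* + ii*) = 6`. Substituting `A + B` from `Q1` into the
Miranda–Persson bound and using six times this identity leaves `6(i*_0 + ii + iii + iv) ≤ 0`, which
forces these four counts to vanish and the bound to be an equality.
-/

open Function

theorem finsum_add_mul_of_hasFiniteSupport {α R : Type*} [NonUnitalNonAssocSemiring R]
    {f : α → R} (hf : f.HasFiniteSupport) (w : α → R) (a : R) :
    ∑ᶠ x, (w x + a) * f x = ∑ᶠ x, w x * f x + a * ∑ᶠ x, f x := by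
  simp_rw [add_mul]
  rw [finsum_add_distrib (f := fun x => w x * f x) (g := fun x => a * f x) (hf.mul_right w)
    (hf.mul_right _), mul_finsum' _ _ hf]

theorem finsum_mul_add_of_hasFiniteSupport {α R : Type*} [NonUnitalNonAssocSemiring R]
    {f g : α → R} (hf : f.HasFiniteSupport) (hg : g.HasFiniteSupport) (w : α → R) :
    ∑ᶠ x, w x * (f x + g x) = ∑ᶠ x, w x * f x + ∑ᶠ x, w x * g x := by
  simp_rw [mul_add]
  exact finsum_add_distrib (f := fun x => w x * f x) (g := fun x => w x * g x) (hf.mul_right w)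
    (hg.mul_right w)

theorem stmt_2_general (i istar : ℕ → ℕ)
    (hfin : (Function.support i).Finite) (hfin' : (Function.support istar).Finite)
    (ii iii iv i0star ivstar iiistar iistar : ℕ)
    (hQ1 : (∑ᶠ n : ℕ, (n : ℤ) * i n) + (∑ᶠ n : ℕ, ((n : ℤ) + 6) * istar n)
      + 6 * i0star + 10 * iistar + 9 * iiistar + 8 * ivstar
      + 4 * iv + 3 * iii + 2 * ii = 24)
    (hQ2 : (∑ᶠ n : ℕ, ((n : ℤ) - 1) * i n) + (∑ᶠ n : ℕ, ((n : ℤ) + 4) * istar n)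
      + 4 * i0star + 8 * iistar + 7 * iiistar + 6 * ivstar
      + 2 * iv + iii = 18)
    (hMP : (∑ᶠ n : ℕ, (n : ℤ) * ((i n : ℤ) + istar n))
      ≤ 6 * (∑ᶠ n : ℕ, ((i n : ℤ) + istar n)) + 4 * ((ii : ℤ) + ivstar)
        + 3 * ((iii : ℤ) + iiistar) + 2 * ((iv : ℤ) + iistar) - 12) :
    (∑ᶠ n : ℕ, (n : ℤ) * ((i n : ℤ) + istar n))
      = 6 * (∑ᶠ n : ℕ, ((i n : ℤ) + istar n)) + 4 * ((ii : ℤ) + ivstar)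
        + 3 * ((iii : ℤ) + iiistar) + 2 * ((iv : ℤ) + iistar) - 12
    ∧ i0star = 0 ∧ iv = 0 ∧ iii = 0 ∧ ii = 0 := by
  have hi : HasFiniteSupport fun n => (i n : ℤ) := HasFiniteSupport.fun_comp hfin Nat.cast_zero
  have histar : HasFiniteSupport fun n => (istar n : ℤ) :=
    HasFiniteSupport.fun_comp hfin' Nat.cast_zero
  simp_rw [sub_eq_add_neg _ (1 : ℤ)] at hQ2
  rw [finsum_add_mul_of_hasFiniteSupport histar] at hQ1
  rw [finsum_add_mul_of_hasFiniteSupport hi, finsum_add_mul_of_hasFiniteSupport histar] at hQ2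
  rw [finsum_mul_add_of_hasFiniteSupport hi histar, finsum_add_distrib hi histar] at hMP ⊢
  have hQ1_sub_hQ2 : (∑ᶠ n, (i n : ℤ)) + 2 * ∑ᶠ n, (istar n : ℤ)
      + 2 * ((i0star : ℤ) + ii + iii + iv + ivstar + iiistar + iistar) = 6 := by
    linarith
  omega

/-- Theorem 0.2 (arithmetic content): if `Q1 = 24`, `Q2 = 18`, `degJ ≠ 0` and
`degJ ≤ Q4`, then `degJ = Q4` and moreover `i*_0 = iv = iii = ii = 0`. -/
theorem stmt_2 (i istar : ℕ → ℕ)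
    (hi0 : i 0 = 0) (histar0 : istar 0 = 0)
    (hfin : (Function.support i).Finite) (hfin' : (Function.support istar).Finite)
    (ii iii iv i0star ivstar iiistar iistar : ℕ)
    (hQ1 : (∑ᶠ n : ℕ, (n : ℤ) * i n) + (∑ᶠ n : ℕ, ((n : ℤ) + 6) * istar n)
      + 6 * i0star + 10 * iistar + 9 * iiistar + 8 * ivstar
      + 4 * iv + 3 * iii + 2 * ii = 24)
    (hQ2 : (∑ᶠ n : ℕ, ((n : ℤ) - 1) * i n) + (∑ᶠ n : ℕ, ((n : ℤ) + 4) * istar n)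
      + 4 * i0star + 8 * iistar + 7 * iiistar + 6 * ivstar
      + 2 * iv + iii = 18)
    (hdegJ : (∑ᶠ n : ℕ, (n : ℤ) * ((i n : ℤ) + istar n)) ≠ 0)
    (hMP : (∑ᶠ n : ℕ, (n : ℤ) * ((i n : ℤ) + istar n))
      ≤ 6 * (∑ᶠ n : ℕ, ((i n : ℤ) + istar n)) + 4 * ((ii : ℤ) + ivstar)
        + 3 * ((iii : ℤ) + iiistar) + 2 * ((iv : ℤ) + iistar) - 12) :
    (∑ᶠ n : ℕ, (n : ℤ) * ((i n : ℤ) + istar n))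
      = 6 * (∑ᶠ n : ℕ, ((i n : ℤ) + istar n)) + 4 * ((ii : ℤ) + ivstar)
        + 3 * ((iii : ℤ) + iiistar) + 2 * ((iv : ℤ) + iistar) - 12
    ∧ i0star = 0 ∧ iv = 0 ∧ iii = 0 ∧ ii = 0 :=
  stmt_2_general i istar hfin hfin' ii iii iv i0star ivstar iiistar iistar hQ1 hQ2 hMP
end
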